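/- Let (V,h,J,ω) be a Hermitian vector space of real dimension 2n ≥ 4. If ξ ∈ V* is nonzero and α is a real (1,1)-form (i.e. J*α = α) satisfying ξ ∧ α = 0 and ξ ∧ (ξ♯⌟α) ∧ ω^{n−1} = 0, then α = 0. -/

import Mathlib

noncomputable section

/-- Raw wedge product of a `p`-form and a `q`-form, given as functions on tuples of
vectors, via the standard alternation formula. -/
def wedgeF {V : Type*} {p q : ℕ} (α : (Fin p → V) → ℝ) (β : (Fin q → V) → ℝ) :
    (Fin (p + q) → V) → ℝ :=
  fun v => (1 / ((p.factorial : ℝ) * (q.factorial : ℝ))) *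
    ∑ σ : Equiv.Perm (Fin (p + q)),
      (((Equiv.Perm.sign σ : ℤˣ) : ℤ) : ℝ) *
        α (fun i => v (σ (Fin.castAdd q i))) * β (fun j => v (σ (Fin.natAdd p j)))

/-- Interior product of a vector with a `(k+1)`-form. -/
def iprodF {V : Type*} {k : ℕ} (u : V) (α : (Fin (k + 1) → V) → ℝ) : (Fin k → V) → ℝ :=
  fun v => α (Fin.cons u v)

/-- A covector viewed as a 1-form on tuples. -/
def oneF {V : Type*} (ξ : V → ℝ) : (Fin 1 → V) → ℝ := fun v => ξ (v 0)

/-- `k`-th wedge power `ω^k` of a 2-form. -/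
def omegaPow {V : Type*} (ω : (Fin 2 → V) → ℝ) : (k : ℕ) → (Fin (2 * k) → V) → ℝ
  | 0 => fun _ => 1
  | (k + 1) => wedgeF (omegaPow ω k) ω

namespace S7

open Equiv Finset

variable {V : Type*}

def sgn {m : ℕ} (σ : Equiv.Perm (Fin m)) : ℝ := (((Equiv.Perm.sign σ : ℤˣ) : ℤ) : ℝ)

def A {m : ℕ} (f : (Fin m → V) → ℝ) (v : Fin m → V) : ℝ :=
  ∑ σ : Equiv.Perm (Fin m), sgn σ * f (fun i => v (σ i))

def D {p q : ℕ} (f : (Fin p → V) → ℝ) (g : (Fin q → V) → ℝ) (w : Fin (p + q) → V) : ℝ :=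
  f (fun i => w (Fin.castAdd q i)) * g (fun j => w (Fin.natAdd p j))

lemma sgn_mul {m : ℕ} (σ τ : Equiv.Perm (Fin m)) : sgn (σ * τ) = sgn σ * sgn τ := by
  simp [sgn]

lemma wedgeF_eq {p q : ℕ} (f : (Fin p → V) → ℝ) (g : (Fin q → V) → ℝ) (v : Fin (p+q) → V) :
    wedgeF f g v = (1 / ((p.factorial : ℝ) * (q.factorial : ℝ))) * A (D f g) v := by
  simp [wedgeF, A, D, sgn, mul_assoc]

def EL (p q : ℕ) (τ : Equiv.Perm (Fin p)) : Equiv.Perm (Fin (p + q)) :=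
  finSumFinEquiv.permCongr (Equiv.sumCongr τ (Equiv.refl (Fin q)))

def ER (p q : ℕ) (τ : Equiv.Perm (Fin q)) : Equiv.Perm (Fin (p + q)) :=
  finSumFinEquiv.permCongr (Equiv.sumCongr (Equiv.refl (Fin p)) τ)

@[simp] lemma EL_castAdd (p q : ℕ) (τ : Equiv.Perm (Fin p)) (i : Fin p) :
    EL p q τ (Fin.castAdd q i) = Fin.castAdd q (τ i) := by
  simp [EL, Equiv.permCongr_apply]

@[simp] lemma EL_natAdd (p q : ℕ) (τ : Equiv.Perm (Fin p)) (j : Fin q) :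
    EL p q τ (Fin.natAdd p j) = Fin.natAdd p j := by
  simp [EL, Equiv.permCongr_apply]

@[simp] lemma ER_castAdd (p q : ℕ) (τ : Equiv.Perm (Fin q)) (i : Fin p) :
    ER p q τ (Fin.castAdd q i) = Fin.castAdd q i := by
  simp [ER, Equiv.permCongr_apply]

@[simp] lemma ER_natAdd (p q : ℕ) (τ : Equiv.Perm (Fin q)) (j : Fin q) :
    ER p q τ (Fin.natAdd p j) = Fin.natAdd p (τ j) := by
  simp [ER, Equiv.permCongr_apply]

@[simp] lemma sgn_EL (p q : ℕ) (τ : Equiv.Perm (Fin p)) : sgn (EL p q τ) = sgn τ := by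
  simp [EL, sgn, Equiv.Perm.sign_permCongr, Equiv.Perm.sign_sumCongr]

@[simp] lemma sgn_ER (p q : ℕ) (τ : Equiv.Perm (Fin q)) : sgn (ER p q τ) = sgn τ := by
  simp [ER, sgn, Equiv.Perm.sign_permCongr, Equiv.Perm.sign_sumCongr]

lemma A_smul {m : ℕ} (c : ℝ) (f : (Fin m → V) → ℝ) (v : Fin m → V) :
    A (fun w => c * f w) v = c * A f v := by
  simp [A, Finset.mul_sum]; exact Finset.sum_congr rfl fun σ _ => by ring

lemma K1 {p q : ℕ} (f : (Fin p → V) → ℝ) (g : (Fin q → V) → ℝ) (v : Fin (p+q) → V) :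
    A (D (A f) g) v = (p.factorial : ℝ) * A (D f g) v := by
  have step1 : A (D (A f) g) v = ∑ τ : Equiv.Perm (Fin p), ∑ σ : Equiv.Perm (Fin (p+q)),
      sgn (σ * EL p q τ) *
        (f (fun i => v ((σ * EL p q τ) (Fin.castAdd q i))) *
         g (fun j => v ((σ * EL p q τ) (Fin.natAdd p j)))) := by
    rw [A]
    simp only [D, A, Finset.sum_mul, Finset.mul_sum]
    rw [Finset.sum_comm]
    refine Finset.sum_congr rfl fun τ _ => Finset.sum_congr rfl fun σ _ => ?_
    simp only [Equiv.Perm.mul_apply, EL_castAdd, EL_natAdd, sgn_mul, sgn_EL]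
    ring
  rw [step1]
  have step2 : ∀ τ : Equiv.Perm (Fin p), ∑ σ : Equiv.Perm (Fin (p+q)),
      sgn (σ * EL p q τ) *
        (f (fun i => v ((σ * EL p q τ) (Fin.castAdd q i))) *
         g (fun j => v ((σ * EL p q τ) (Fin.natAdd p j)))) = A (D f g) v := by
    intro τ
    calc ∑ σ : Equiv.Perm (Fin (p+q)), sgn (σ * EL p q τ) *
        (f (fun i => v ((σ * EL p q τ) (Fin.castAdd q i))) *
         g (fun j => v ((σ * EL p q τ) (Fin.natAdd p j))))
        = ∑ σ : Equiv.Perm (Fin (p+q)),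
          (fun ρ : Equiv.Perm (Fin (p+q)) => sgn ρ * D f g fun i => v (ρ i))
            ((Equiv.mulRight (EL p q τ)) σ) := rfl
      _ = ∑ ρ : Equiv.Perm (Fin (p+q)), sgn ρ * D f g fun i => v (ρ i) :=
          Fintype.sum_equiv (Equiv.mulRight _) _ _ fun σ => rfl
      _ = A (D f g) v := rfl
  simp only [step2, Finset.sum_const, Finset.card_univ, Fintype.card_perm, Fintype.card_fin,
    nsmul_eq_mul]

lemma K2 {p q : ℕ} (f : (Fin p → V) → ℝ) (g : (Fin q → V) → ℝ) (v : Fin (p+q) → V) :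
    A (D f (A g)) v = (q.factorial : ℝ) * A (D f g) v := by
  have step1 : A (D f (A g)) v = ∑ τ : Equiv.Perm (Fin q), ∑ σ : Equiv.Perm (Fin (p+q)),
      sgn (σ * ER p q τ) *
        (f (fun i => v ((σ * ER p q τ) (Fin.castAdd q i))) *
         g (fun j => v ((σ * ER p q τ) (Fin.natAdd p j)))) := by
    rw [A]
    simp only [D, A, Finset.sum_mul, Finset.mul_sum]
    rw [Finset.sum_comm]
    refine Finset.sum_congr rfl fun τ _ => Finset.sum_congr rfl fun σ _ => ?_
    simp only [Equiv.Perm.mul_apply, ER_castAdd, ER_natAdd, sgn_mul, sgn_ER]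
    ring
  rw [step1]
  have step2 : ∀ τ : Equiv.Perm (Fin q), ∑ σ : Equiv.Perm (Fin (p+q)),
      sgn (σ * ER p q τ) *
        (f (fun i => v ((σ * ER p q τ) (Fin.castAdd q i))) *
         g (fun j => v ((σ * ER p q τ) (Fin.natAdd p j)))) = A (D f g) v := by
    intro τ
    calc ∑ σ : Equiv.Perm (Fin (p+q)), sgn (σ * ER p q τ) *
        (f (fun i => v ((σ * ER p q τ) (Fin.castAdd q i))) *
         g (fun j => v ((σ * ER p q τ) (Fin.natAdd p j))))
        = ∑ σ : Equiv.Perm (Fin (p+q)),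
          (fun ρ : Equiv.Perm (Fin (p+q)) => sgn ρ * D f g fun i => v (ρ i))
            ((Equiv.mulRight (ER p q τ)) σ) := rfl
      _ = ∑ ρ : Equiv.Perm (Fin (p+q)), sgn ρ * D f g fun i => v (ρ i) :=
          Fintype.sum_equiv (Equiv.mulRight _) _ _ fun σ => rfl
      _ = A (D f g) v := rfl
  simp only [step2, Finset.sum_const, Finset.card_univ, Fintype.card_perm, Fintype.card_fin,
    nsmul_eq_mul]

def P (ωb : V → V → ℝ) (k : ℕ) (w : Fin (2 * k) → V) : ℝ :=
  ∏ i : Fin k, ωb (w ⟨2 * i.1, by have := i.2; omega⟩) (w ⟨2 * i.1 + 1, by have := i.2; omega⟩)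

lemma A_P_zero (ωb : V → V → ℝ) (v : Fin (2 * 0) → V) : A (P ωb 0) v = 1 := by
  have h1 : ∀ σ : Equiv.Perm (Fin (2 * 0)), σ = 1 := fun σ => Equiv.ext fun x => x.elim0
  calc A (P ωb 0) v = ∑ σ : Equiv.Perm (Fin (2 * 0)), 1 := by
        refine Finset.sum_congr rfl fun σ _ => ?_
        rw [h1 σ]
        simp [sgn, P]
    _ = 1 := by
        simp [Finset.card_univ]

lemma D_P (ωb : V → V → ℝ) (ω2 : (Fin 2 → V) → ℝ) (hω : ∀ w, ω2 w = ωb (w 0) (w 1))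
    (k : ℕ) : D (P ωb k) ω2 = P ωb (k + 1) := by
  funext w
  rw [D, hω]
  show P ωb k _ * ωb (w (Fin.natAdd (2*k) 0)) (w (Fin.natAdd (2*k) 1)) = _
  rw [P, P, Fin.prod_univ_castSucc]
  rfl

lemma omegaPow_A (ω2 : (Fin 2 → V) → ℝ) (ωb : V → V → ℝ) (hω : ∀ w, ω2 w = ωb (w 0) (w 1))
    (k : ℕ) (v : Fin (2 * k) → V) :
    omegaPow ω2 k v = (1 / 2 ^ k : ℝ) * A (P ωb k) v := by
  induction k with
  | zero => rw [A_P_zero]; simp [omegaPow]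
  | succ k IH =>
    have hD : D (omegaPow ω2 k) ω2 = fun w => (1 / 2 ^ k : ℝ) * D (A (P ωb k)) ω2 w := by
      funext w
      rw [D, D, IH]
      ring
    calc omegaPow ω2 (k+1) v
        = wedgeF (omegaPow ω2 k) ω2 v := rfl
      _ = (1 / (((2*k).factorial : ℝ) * ((2:ℕ).factorial : ℝ))) *
            A (D (omegaPow ω2 k) ω2) v := wedgeF_eq _ _ _
      _ = (1 / (((2*k).factorial : ℝ) * 2)) *
            ((1 / 2 ^ k : ℝ) * A (D (A (P ωb k)) ω2) v) := by
          rw [hD, A_smul]; norm_num [Nat.factorial]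
      _ = (1 / (((2*k).factorial : ℝ) * 2)) *
            ((1 / 2 ^ k : ℝ) * (((2*k).factorial : ℝ) * A (D (P ωb k) ω2) v)) := by
          rw [K1]
      _ = (1 / 2 ^ (k+1) : ℝ) * A (P ωb (k+1)) v := by
          rw [D_P ωb ω2 hω]
          have : ((2*k).factorial : ℝ) ≠ 0 := Nat.cast_ne_zero.mpr (Nat.factorial_ne_zero _)
          field_simp
          ring

def z0 (m : ℕ) : Fin (2 + 2 * m) := ⟨0, by omega⟩
def z1 (m : ℕ) : Fin (2 + 2 * m) := ⟨1, by omega⟩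

lemma fin_two (j : Fin 2) : j = 0 ∨ j = 1 := by revert j; decide

def pl (m : ℕ) (i : Fin m) : Fin (2 + 2 * m) := ⟨2 + 2 * i.1, by have := i.2; omega⟩
def pr (m : ℕ) (i : Fin m) : Fin (2 + 2 * m) := ⟨2 + 2 * i.1 + 1, by have := i.2; omega⟩

lemma pl_inj {m : ℕ} {i j : Fin m} (h : pl m i = pl m j) : i = j := by
  have := congrArg Fin.val h
  simp only [pl] at this
  exact Fin.ext (by omega)

lemma pr_inj {m : ℕ} {i j : Fin m} (h : pr m i = pr m j) : i = j := by
  have := congrArg Fin.val h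
  simp only [pr] at this
  exact Fin.ext (by omega)

lemma pl_ne_pr {m : ℕ} (i j : Fin m) : pl m i ≠ pr m j := by
  intro h
  have := congrArg Fin.val h
  simp only [pl, pr] at this
  omega

lemma pl_ne_z0 {m : ℕ} (i : Fin m) : pl m i ≠ z0 m := by
  intro h
  have := congrArg Fin.val h
  simp only [pl, z0] at this
  omega

lemma pl_ne_z1 {m : ℕ} (i : Fin m) : pl m i ≠ z1 m := by
  intro h
  have := congrArg Fin.val h
  simp only [pl, z1] at this
  omega

def E2 (m : ℕ) : (Fin 2 ⊕ (Fin m × Fin 2)) ≃ Fin (2 + 2 * m) :=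
  (Equiv.sumCongr (Equiv.refl (Fin 2)) finProdFinEquiv).trans
    ((finSumFinEquiv).trans (finCongr (by omega)))

lemma E2_val_inl {m : ℕ} (j : Fin 2) : (E2 m (Sum.inl j)).1 = j.1 := by simp [E2]

lemma E2_val_inr {m : ℕ} (i : Fin m) (ε : Fin 2) :
    (E2 m (Sum.inr (i, ε))).1 = 2 + (ε.1 + 2 * i.1) := by simp [E2]

lemma E2_inl0 {m : ℕ} : E2 m (Sum.inl 0) = z0 m :=
  Fin.ext (by rw [E2_val_inl]; rfl)

lemma E2_inl1 {m : ℕ} : E2 m (Sum.inl 1) = z1 m :=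
  Fin.ext (by rw [E2_val_inl]; rfl)

lemma E2_inr0 {m : ℕ} (i : Fin m) : E2 m (Sum.inr (i, 0)) = pl m i :=
  Fin.ext (by rw [E2_val_inr]; simp [pl])

lemma E2_inr1 {m : ℕ} (i : Fin m) : E2 m (Sum.inr (i, 1)) = pr m i :=
  Fin.ext (by rw [E2_val_inr]; simp [pr]; omega)

def flipP {m : ℕ} (s : Fin m → Bool) (i : Fin m) : Equiv.Perm (Fin 2) :=
  if s i then Equiv.swap 0 1 else 1

def psi {m : ℕ} (π : Equiv.Perm (Fin m)) (s : Fin m → Bool) : Equiv.Perm (Fin m × Fin 2) :=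
  (Equiv.prodCongrRight (flipP s)).trans (Equiv.prodCongrLeft fun _ => π)

def Psi {m : ℕ} (π : Equiv.Perm (Fin m)) (s : Fin m → Bool) : Equiv.Perm (Fin (2 + 2 * m)) :=
  (E2 m).permCongr (Equiv.sumCongr (Equiv.refl (Fin 2)) (psi π s))

lemma Psi_apply_E2 {m : ℕ} (π : Equiv.Perm (Fin m)) (s : Fin m → Bool) (x) :
    Psi π s (E2 m x) = E2 m ((Equiv.sumCongr (Equiv.refl (Fin 2)) (psi π s)) x) := by
  simp [Psi, Equiv.permCongr_apply]

lemma psi_apply {m : ℕ} (π : Equiv.Perm (Fin m)) (s : Fin m → Bool) (i : Fin m) (ε : Fin 2) :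
    psi π s (i, ε) = (π i, flipP s i ε) := rfl

lemma Psi_zero {m : ℕ} (π : Equiv.Perm (Fin m)) (s : Fin m → Bool) : Psi π s (z0 m) = z0 m := by
  rw [← E2_inl0, Psi_apply_E2]
  simp

lemma Psi_one {m : ℕ} (π : Equiv.Perm (Fin m)) (s : Fin m → Bool) : Psi π s (z1 m) = z1 m := by
  rw [← E2_inl1, Psi_apply_E2]
  simp

lemma Psi_pl {m : ℕ} (π : Equiv.Perm (Fin m)) (s : Fin m → Bool) (i : Fin m) :
    Psi π s (pl m i) = if s i then pr m (π i) else pl m (π i) := by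
  rw [← E2_inr0, Psi_apply_E2]
  simp only [Equiv.sumCongr_apply, Sum.map_inr, psi_apply]
  by_cases hs : s i
  · simp [flipP, hs, E2_inr1]
  · simp [flipP, hs, E2_inr0]

lemma Psi_pr {m : ℕ} (π : Equiv.Perm (Fin m)) (s : Fin m → Bool) (i : Fin m) :
    Psi π s (pr m i) = if s i then pl m (π i) else pr m (π i) := by
  rw [← E2_inr1, Psi_apply_E2]
  simp only [Equiv.sumCongr_apply, Sum.map_inr, psi_apply]
  by_cases hs : s i
  · simp [flipP, hs, E2_inr0]
  · simp [flipP, hs, E2_inr1]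

lemma sign_psi {m : ℕ} (π : Equiv.Perm (Fin m)) (s : Fin m → Bool) :
    Equiv.Perm.sign (psi π s) = ∏ i : Fin m, Equiv.Perm.sign (flipP s i) := by
  have : psi π s = (Equiv.prodCongrLeft fun _ : Fin 2 => π) * (Equiv.prodCongrRight (flipP s)) := rfl
  rw [this, map_mul, Equiv.Perm.sign_prodCongrLeft, Equiv.Perm.sign_prodCongrRight]
  simp [Fin.prod_univ_two, Int.units_mul_self]

lemma sgn_Psi {m : ℕ} (π : Equiv.Perm (Fin m)) (s : Fin m → Bool) :
    sgn (Psi π s) = ∏ i : Fin m, (if s i then (-1 : ℝ) else 1) := by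
  have h1 : Equiv.Perm.sign (Psi π s) = ∏ i : Fin m, Equiv.Perm.sign (flipP s i) := by
    rw [Psi, Equiv.Perm.sign_permCongr, Equiv.Perm.sign_sumCongr, sign_psi]
    simp
  rw [sgn, h1]
  push_cast
  refine Finset.prod_congr rfl fun i _ => ?_
  by_cases hs : s i
  · simp [flipP, hs, Equiv.Perm.sign_swap (by decide : (0 : Fin 2) ≠ 1)]
  · simp [flipP, hs]

lemma Psi_inj {m : ℕ} : Function.Injective
    (fun p : Equiv.Perm (Fin m) × (Fin m → Bool) => Psi p.1 p.2) := by
  rintro ⟨π, s⟩ ⟨π', s'⟩ hEq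
  simp only at hEq
  have hi : ∀ i, (if s i then pr m (π i) else pl m (π i)) =
      (if s' i then pr m (π' i) else pl m (π' i)) := by
    intro i
    rw [← Psi_pl π s i, ← Psi_pl π' s' i, hEq]
  have key : ∀ i, s i = s' i ∧ π i = π' i := by
    intro i
    have h := hi i
    by_cases h1 : s i <;> by_cases h2 : s' i <;> simp only [h1, h2, if_true, if_false] at h
    · exact ⟨by rw [h1, h2], pr_inj h⟩
    · exact absurd h.symm (pl_ne_pr _ _)
    · exact absurd h (pl_ne_pr _ _)
    · exact ⟨by simp only [Bool.not_eq_true] at h1 h2; rw [h1, h2], pl_inj h⟩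
  have hs : s = s' := funext fun i => (key i).1
  have hπ : π = π' := Equiv.ext fun i => (key i).2
  rw [Prod.mk.injEq]
  exact ⟨hπ, hs⟩

theorem lemB {m : ℕ} (b : Fin (2 + 2 * m) → V) (ξf θf : V → ℝ) (ωb : V → V → ℝ)
    (hξ0 : ξf (b (z0 m)) ≠ 0) (hξ : ∀ j, j ≠ z0 m → ξf (b j) = 0)
    (hθ1 : θf (b (z1 m)) ≠ 0) (hθ : ∀ j, j ≠ z1 m → θf (b j) = 0)
    (hd : ∀ i : Fin m, ωb (b (pl m i)) (b (pr m i)) ≠ 0)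
    (hanti : ∀ x y, ωb (b x) (b y) = - ωb (b y) (b x))
    (hoff : ∀ x y, ωb (b x) (b y) ≠ 0 → (x = z0 m ∧ y = z1 m) ∨ (x = z1 m ∧ y = z0 m) ∨
      ∃ i : Fin m, (x = pl m i ∧ y = pr m i) ∨ (x = pr m i ∧ y = pl m i)) :
    A (fun w => ξf (w (z0 m)) * θf (w (z1 m)) * ∏ i : Fin m, ωb (w (pl m i)) (w (pr m i))) b ≠ 0 := by
  classical
  set t : ℝ := ξf (b (z0 m)) * θf (b (z1 m)) * ∏ i : Fin m, ωb (b (pl m i)) (b (pr m i)) with ht_def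
  have ht : t ≠ 0 := by
    refine mul_ne_zero (mul_ne_zero hξ0 hθ1) ?_
    exact Finset.prod_ne_zero_iff.mpr fun i _ => hd i
  set term : Equiv.Perm (Fin (2 + 2 * m)) → ℝ := fun ρ =>
    sgn ρ * (ξf (b (ρ (z0 m))) * θf (b (ρ (z1 m))) * ∏ i : Fin m, ωb (b (ρ (pl m i))) (b (ρ (pr m i))))
    with hterm_def
  have hA : A (fun w => ξf (w (z0 m)) * θf (w (z1 m)) * ∏ i : Fin m, ωb (w (pl m i)) (w (pr m i))) b =
      ∑ ρ : Equiv.Perm (Fin (2 + 2 * m)), term ρ := rfl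
  have keyterm : ∀ (π : Equiv.Perm (Fin m)) (s : Fin m → Bool), term (Psi π s) = t := by
    intro π s
    have hprod : ∏ i : Fin m, ωb (b (Psi π s (pl m i))) (b (Psi π s (pr m i))) =
        (∏ i : Fin m, (if s i then (-1 : ℝ) else 1)) *
          ∏ i : Fin m, ωb (b (pl m (π i))) (b (pr m (π i))) := by
      rw [← Finset.prod_mul_distrib]
      refine Finset.prod_congr rfl fun i _ => ?_
      rw [Psi_pl, Psi_pr]
      by_cases hs : s i
      · simp only [hs, if_true]
        rw [hanti]
        ring
      · simp only [Bool.not_eq_true] at hs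
        simp only [hs, Bool.false_eq_true, if_false]
        ring
    have hre : ∏ i : Fin m, ωb (b (pl m (π i))) (b (pr m (π i))) =
        ∏ j : Fin m, ωb (b (pl m j)) (b (pr m j)) :=
      Equiv.prod_comp π (fun j => ωb (b (pl m j)) (b (pr m j)))
    have hsq : sgn (Psi π s) * (∏ i : Fin m, (if s i then (-1 : ℝ) else 1)) = 1 := by
      rw [sgn_Psi, ← Finset.prod_mul_distrib]
      rw [show (1 : ℝ) = ∏ _i : Fin m, 1 from (Finset.prod_const_one).symm]
      refine Finset.prod_congr rfl fun i _ => ?_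
      by_cases hs : s i <;> simp [hs]
    rw [hterm_def]
    simp only [Psi_zero, Psi_one, hprod, hre]
    calc sgn (Psi π s) * (ξf (b (z0 m)) * θf (b (z1 m)) *
          ((∏ i : Fin m, (if s i then (-1 : ℝ) else 1)) * ∏ j : Fin m, ωb (b (pl m j)) (b (pr m j))))
        = (sgn (Psi π s) * (∏ i : Fin m, (if s i then (-1 : ℝ) else 1))) *
          (ξf (b (z0 m)) * θf (b (z1 m))
            * ∏ j : Fin m, ωb (b (pl m j)) (b (pr m j))) := by ring
      _ = t := by rw [hsq, ht_def]; ring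
  have support : ∀ ρ, ρ ∉ Finset.image
      (fun p : Equiv.Perm (Fin m) × (Fin m → Bool) => Psi p.1 p.2) Finset.univ → term ρ = 0 := by
    intro ρ hρ
    by_contra hne
    apply hρ
    have hfac : ξf (b (ρ (z0 m))) ≠ 0 ∧ θf (b (ρ (z1 m))) ≠ 0 ∧
        ∀ i : Fin m, ωb (b (ρ (pl m i))) (b (ρ (pr m i))) ≠ 0 := by
      have h1 : ξf (b (ρ (z0 m))) * θf (b (ρ (z1 m)))
          * ∏ i : Fin m, ωb (b (ρ (pl m i))) (b (ρ (pr m i))) ≠ 0 := by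
        intro hz
        apply hne
        rw [hterm_def]
        simp [hz]
      have h2 := mul_ne_zero_iff.mp h1
      have h3 := mul_ne_zero_iff.mp h2.1
      exact ⟨h3.1, h3.2, fun i => Finset.prod_ne_zero_iff.mp h2.2 i (Finset.mem_univ i)⟩
    have hρ0 : ρ (z0 m) = z0 m := by
      by_contra hc
      exact hfac.1 (hξ _ hc)
    have hρ1 : ρ (z1 m) = z1 m := by
      by_contra hc
      exact hfac.2.1 (hθ _ hc)
    have hpair : ∀ i : Fin m, ∃ j : Fin m,
        (ρ (pl m i) = pl m j ∧ ρ (pr m i) = pr m j) ∨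
        (ρ (pl m i) = pr m j ∧ ρ (pr m i) = pl m j) := by
      intro i
      rcases hoff _ _ (hfac.2.2 i) with ⟨h0, _⟩ | ⟨h0, _⟩ | ⟨j, hj⟩
      · exact absurd (ρ.injective (h0.trans hρ0.symm)) (pl_ne_z0 i)
      · exact absurd (ρ.injective (h0.trans hρ1.symm)) (pl_ne_z1 i)
      · exact ⟨j, hj⟩
    choose π0 hπ0 using hpair
    have hπ0inj : Function.Injective π0 := by
      intro i1 i2 he
      rcases hπ0 i1 with ⟨a1, b1⟩ | ⟨a1, b1⟩ <;> rcases hπ0 i2 with ⟨a2, b2⟩ | ⟨a2, b2⟩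
      · have hh : ρ (pl m i1) = ρ (pl m i2) := by rw [a1, a2, he]
        exact pl_inj (ρ.injective hh)
      · have hh : ρ (pl m i1) = ρ (pr m i2) := by rw [a1, b2, he]
        exact absurd (ρ.injective hh) (pl_ne_pr _ _)
      · have hh : ρ (pr m i1) = ρ (pl m i2) := by rw [b1, a2, he]
        exact absurd (ρ.injective hh).symm (pl_ne_pr _ _)
      · have hh : ρ (pr m i1) = ρ (pr m i2) := by rw [b1, b2, he]
        exact pr_inj (ρ.injective hh)
    have hπ0bij : Function.Bijective π0 := Finite.injective_iff_bijective.mp hπ0inj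
    set π : Equiv.Perm (Fin m) := Equiv.ofBijective π0 hπ0bij with hπ_def
    set s : Fin m → Bool := fun i => decide (ρ (pl m i) = pr m (π0 i)) with hs_def
    refine Finset.mem_image.mpr ⟨(π, s), Finset.mem_univ _, ?_⟩
    refine Equiv.ext fun x => ?_
    obtain ⟨y, rfl⟩ := (E2 m).surjective x
    rcases y with j | ⟨i, ε⟩
    · rcases fin_two j with rfl | rfl
      · rw [E2_inl0]; exact (Psi_zero π s).trans hρ0.symm
      · rw [E2_inl1]; exact (Psi_one π s).trans hρ1.symm
    · have hπi : π i = π0 i := rfl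
      rcases fin_two ε with rfl | rfl
      · rw [E2_inr0]; rw [show (Psi (π, s).1 (π, s).2) (pl m i) = _ from Psi_pl π s i, hπi]
        rcases hπ0 i with ⟨a1, _⟩ | ⟨a1, _⟩
        · have hsi : s i = false := by
            rw [hs_def]
            simp only [a1, decide_eq_false_iff_not]
            exact fun hh => pl_ne_pr _ _ hh
          rw [hsi]
          simp [a1]
        · have hsi : s i = true := by
            rw [hs_def]
            simp [a1]
          rw [hsi]
          simp [a1]
      · rw [E2_inr1]; rw [show (Psi (π, s).1 (π, s).2) (pr m i) = _ from Psi_pr π s i, hπi]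
        rcases hπ0 i with ⟨a1, b1⟩ | ⟨a1, b1⟩
        · have hsi : s i = false := by
            rw [hs_def]
            simp only [a1, decide_eq_false_iff_not]
            exact fun hh => pl_ne_pr _ _ hh
          rw [hsi]
          simp [b1]
        · have hsi : s i = true := by
            rw [hs_def]
            simp [a1]
          rw [hsi]
          simp [b1]
  rw [hA]
  have hsum : ∑ ρ : Equiv.Perm (Fin (2 + 2 * m)), term ρ =
      ∑ ρ ∈ Finset.image (fun p : Equiv.Perm (Fin m) × (Fin m → Bool) => Psi p.1 p.2) Finset.univ,
        term ρ :=
    (Finset.sum_subset (Finset.subset_univ _) (fun ρ _ hρ => support ρ hρ)).symm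
  rw [hsum, Finset.sum_image (fun p _ q _ hpq => Psi_inj hpq)]
  have : ∑ p : Equiv.Perm (Fin m) × (Fin m → Bool), term (Psi p.1 p.2) =
      ∑ _p : Equiv.Perm (Fin m) × (Fin m → Bool), t :=
    Finset.sum_congr rfl fun p _ => keyterm p.1 p.2
  rw [this, Finset.sum_const, Finset.card_univ, nsmul_eq_mul]
  exact mul_ne_zero (Nat.cast_ne_zero.mpr Fintype.card_ne_zero) ht

lemma perm3_sum (F : Equiv.Perm (Fin 3) → ℝ) :
    ∑ σ : Equiv.Perm (Fin 3), F σ = F 1 + F (Equiv.swap 0 1) + F (Equiv.swap 0 2) +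
      F (Equiv.swap 1 2) + F (Equiv.swap 0 1 * Equiv.swap 1 2)
      + F (Equiv.swap 1 2 * Equiv.swap 0 1) := by
  rw [show (Finset.univ : Finset (Equiv.Perm (Fin 3))) =
    insert 1 (insert (Equiv.swap 0 1) (insert (Equiv.swap 0 2) (insert (Equiv.swap 1 2)
       (insert (Equiv.swap 0 1 * Equiv.swap 1 2) {Equiv.swap 1 2 * Equiv.swap 0 1})))) from by decide]
  rw [Finset.sum_insert (by decide), Finset.sum_insert (by decide), Finset.sum_insert (by decide),
    Finset.sum_insert (by decide), Finset.sum_insert (by decide), Finset.sum_singleton]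
  ring

lemma h1key {V : Type*} (ξf : V → ℝ) (αf : V → V → ℝ)
    (hant : ∀ a b : V, αf a b = - αf b a)
    (h1 : wedgeF (oneF ξf) (fun v : Fin 2 → V => αf (v 0) (v 1)) = 0)
    (x y z : V) : ξf x * αf y z - ξf y * αf x z + ξf z * αf x y = 0 := by
  have hv := congrFun h1 (![x, y, z] : Fin 3 → V)
  simp only [wedgeF, oneF, Pi.zero_apply] at hv
  rw [perm3_sum] at hv
  norm_num [show ∀ i : Fin 1, Fin.castAdd 2 i = 0 from by decide,
    show (Fin.natAdd 1 (0 : Fin 2) : Fin 3) = 1 from by decide,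
    show (Fin.natAdd 1 (1 : Fin 2) : Fin 3) = 2 from by decide,
    Equiv.Perm.sign_swap, Equiv.swap_apply_def, Matrix.cons_val_zero, Matrix.cons_val_one] at hv
  simp (config := { decide := true }) only [show ((2:Fin 3) = 0) = False from by simp,
    show ((2:Fin 3) = 1) = False from by simp, show ((1:Fin 3) = 2) = False from by simp,
    show ((0:Fin 3) = 2) = False from by simp, if_false, if_true,
    Matrix.cons_val_zero, Matrix.cons_val_one, Matrix.head_cons] at hv
  rw [show (![x,y,z] (2 : Fin 3)) = z from rfl] at hv
  push_cast at hv
  have a1 := hant y z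
  have a2 := hant x z
  have a3 := hant x y
  linear_combination hv / 2 + (ξf x / 2) * a1 - (ξf y / 2) * a2 + (ξf z / 2) * a3

lemma exists_ker {V : Type*} [AddCommGroup V] [Module ℝ V] {ι : Type} [Fintype ι]
    (hι : Fintype.card ι < Module.finrank ℝ V)
    (L : ι → (V →ₗ[ℝ] ℝ)) : ∃ w : V, w ≠ 0 ∧ ∀ i, L i w = 0 := by
  haveI : FiniteDimensional ℝ V := FiniteDimensional.of_finrank_pos (by omega)
  set Φ : V →ₗ[ℝ] (ι → ℝ) := LinearMap.pi L with hΦ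
  have hker : LinearMap.ker Φ ≠ ⊥ := by
    intro hbot
    have h1 := LinearMap.finrank_range_add_finrank_ker Φ
    rw [hbot, finrank_bot] at h1
    have h2 : Module.finrank ℝ (LinearMap.range Φ) ≤ Fintype.card ι := by
      have h3 := Submodule.finrank_le (LinearMap.range Φ)
      rwa [Module.finrank_pi] at h3
    omega
  obtain ⟨w, hw, hw0⟩ := Submodule.exists_mem_ne_zero_of_ne_bot hker
  exact ⟨w, hw0, fun i => congrFun (LinearMap.mem_ker.mp hw) i⟩

end S7

/-- in a Hermitian vector space of real dimension `2n ≥ 4`, if `ξ ≠ 0` and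
`α` is a real `(1,1)`-form with `ξ ∧ α = 0` and `ξ ∧ (ξ♯⌟α) ∧ ω^{n−1} = 0`, then `α = 0`.
Here `ω(v,w) = h(Jv,w)` and `u = ξ♯` is the metric dual of `ξ`. -/
theorem stmt7 {n : ℕ} (hn : 2 ≤ n) (V : Type*) [AddCommGroup V] [Module ℝ V]
    (hdim : Module.finrank ℝ V = 2 * n)
    (J : V →ₗ[ℝ] V) (hJ : ∀ v, J (J v) = -v)
    (h : LinearMap.BilinForm ℝ V)
    (hsymm : ∀ v w, h v w = h w v)
    (hpos : ∀ v, v ≠ 0 → 0 < h v v)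
    (hJinv : ∀ v w, h (J v) (J w) = h v w)
    (ξ : V →ₗ[ℝ] ℝ) (hξ : ξ ≠ 0) (u : V) (hu : ∀ w, h u w = ξ w)
    (α : LinearMap.BilinForm ℝ V)
    (halt : ∀ v, α v v = 0)
    (hα11 : ∀ v w, α (J v) (J w) = α v w)
    (h1 : wedgeF (oneF fun x => ξ x) (fun v : Fin 2 → V => α (v 0) (v 1)) = 0)
    (h2 : wedgeF
        (wedgeF (oneF fun x => ξ x) (iprodF u (fun v : Fin 2 → V => α (v 0) (v 1))))
        (omegaPow (fun v : Fin 2 → V => h (J (v 0)) (v 1)) (n - 1)) = 0) :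
    α = 0 := by
  classical
  open S7 in
  -- basic facts
  have αanti : ∀ a b : V, α a b = - α b a := by
    intro a b
    have hab := halt (a + b)
    simp only [map_add, LinearMap.add_apply] at hab
    rw [halt a, halt b] at hab
    linarith
  have hJv0 : ∀ v : V, h (J v) v = 0 := by
    intro v
    have t := hJinv (J v) v
    rw [hJ v] at t
    simp only [map_neg, LinearMap.neg_apply] at t
    have t2 := hsymm v (J v)
    linarith
  have hJJ : ∀ v w : V, h (J (J v)) w = - h v w := by
    intro v w
    rw [hJ v]
    simp [map_neg]
  have hωanti : ∀ v w : V, h (J v) w = - h (J w) v := by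
    intro v w
    have t := hJinv w (J v)
    rw [hJ v, map_neg] at t
    rw [hsymm (J v) w]
    exact t.symm
  have hu0 : u ≠ 0 := by
    intro huz
    apply hξ
    apply LinearMap.ext
    intro w
    rw [← hu w, huz]
    simp
  have su_pos : 0 < h u u := hpos u hu0
  have hξu : ξ u = h u u := (hu u).symm
  have hηu : ξ (J u) = 0 := by
    rw [← hu (J u), hsymm]
    exact hJv0 u
  -- the 1-forms ξ and η = ξ ∘ J
  set η : V →ₗ[ℝ] ℝ := ξ ∘ₗ J with hη_def
  have hηapp : ∀ v, η v = ξ (J v) := fun v => rfl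
  -- a vector with ξ x0 = 1
  obtain ⟨w1, hw1⟩ : ∃ w, ξ w ≠ 0 := by
    by_contra hc
    push_neg at hc
    exact hξ (LinearMap.ext fun w => hc w)
  obtain ⟨x0, hx0⟩ : ∃ x0 : V, ξ x0 = 1 :=
    ⟨(ξ w1)⁻¹ • w1, by rw [map_smul, smul_eq_mul, inv_mul_cancel₀ hw1]⟩
  -- ξ and η are independent: find q with ξ q = 0, η q = 1 and p with ξ p = 1, η p = 0
  have hind : ∃ v, η v - ξ v * η x0 ≠ 0 := by
    by_contra hcon
    push_neg at hcon
    have hv : ∀ v, η v = ξ v * η x0 := fun v => by have := hcon v; linarith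
    have h1' : η (J x0) = ξ (J x0) * η x0 := hv (J x0)
    have h2' : η (J x0) = -1 := by
      rw [hηapp, hJ x0, map_neg, hx0]
    have h3' : ξ (J x0) = η x0 := (hηapp x0).symm
    have h4' : η x0 * η x0 = -1 := by rw [← h2', h1', h3']
    nlinarith [sq_nonneg (η x0), h4']
  obtain ⟨v1, hv1⟩ := hind
  obtain ⟨q, hq1, hq2⟩ : ∃ q : V, ξ q = 0 ∧ η q = 1 := by
    refine ⟨(η v1 - ξ v1 * η x0)⁻¹ • (v1 - (ξ v1) • x0), ?_, ?_⟩
    · rw [map_smul, map_sub, map_smul, hx0]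
      simp
    · rw [map_smul, map_sub, map_smul]
      simp only [smul_eq_mul]
      field_simp
  obtain ⟨p, hp1, hp2⟩ : ∃ p : V, ξ p = 1 ∧ η p = 0 := by
    refine ⟨x0 - (η x0) • q, ?_, ?_⟩
    · rw [map_sub, map_smul, hx0, hq1]
      simp
    · rw [map_sub, map_smul, hq2]
      simp
  -- α = ξ ∧ β where β = α x0
  have hαβ : ∀ v w, α v w = ξ v * α x0 w - ξ w * α x0 v := by
    intro v w
    have key := h1key (fun x => ξ x) (fun a b => α a b) αanti h1 x0 v w
    linear_combination key - α v w * hx0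
  -- from the (1,1) condition, β vanishes on ker ξ ∩ ker η
  have hβid : ∀ v w : V, η v * α x0 (J w) - η w * α x0 (J v) = ξ v * α x0 w - ξ w * α x0 v := by
    intro v w
    have e1' : α v w = ξ (J v) * α x0 (J w) - ξ (J w) * α x0 (J v) := by
      rw [← hα11 v w]
      exact hαβ _ _
    have e2 := hαβ v w
    exact (e2.symm.trans e1').symm
  have βK : ∀ v, ξ v = 0 → η v = 0 → α x0 v = 0 := by
    intro v hv1' hv2'
    have ep := hβid v p
    rw [hv1', hv2', hp1, hp2] at ep
    simp at ep
    linarith [ep]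
  have hβdec : ∀ v, α x0 v = α x0 p * ξ v + α x0 q * η v := by
    intro v
    have hker : α x0 (v - ξ v • p - η v • q) = 0 := by
      refine βK _ ?_ ?_
      · rw [map_sub, map_sub, map_smul, map_smul, hp1, hq1]
        simp
      · rw [map_sub, map_sub, map_smul, map_smul, hp2, hq2]
        simp
    rw [map_sub, map_sub, map_smul, map_smul] at hker
    simp only [smul_eq_mul] at hker
    linarith
  have halpha : ∀ v w, α v w = α x0 q * (ξ v * η w - ξ w * η v) := by
    intro v w
    rw [hαβ v w, hβdec w, hβdec v]
    ring
  by_cases hc : α x0 q = 0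
  · apply LinearMap.ext
    intro v
    apply LinearMap.ext
    intro w
    rw [show α v w = α x0 q * (ξ v * η w - ξ w * η v) from halpha v w, hc]
    simp
  · exfalso
    set m : ℕ := n - 1 with hm
    -- the orthogonal family
    have exful : ∀ k : ℕ, 2 + 2 * k ≤ 2 * n → ∃ e : Fin k → V,
        (∀ i, e i ≠ 0) ∧ (∀ i, h u (e i) = 0) ∧ (∀ i, h (J u) (e i) = 0) ∧
        (∀ i j, i ≠ j → h (e i) (e j) = 0) ∧ (∀ i j, i ≠ j → h (J (e i)) (e j) = 0) := by
      intro k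
      induction k with
      | zero =>
        intro _
        exact ⟨fun i => i.elim0, fun i => i.elim0, fun i => i.elim0, fun i => i.elim0,
          fun i => i.elim0, fun i => i.elim0⟩
      | succ k IH =>
        intro hk
        obtain ⟨e, he1, he2, he3, he4, he5⟩ := IH (by omega)
        obtain ⟨w, hw0, hwK⟩ := S7.exists_ker (V := V) (ι := Fin 2 ⊕ (Fin k ⊕ Fin k))
          (by simp [hdim]; omega)
          (Sum.elim (![h u, h (J u)]) (Sum.elim (fun i => h (e i)) (fun i => h (J (e i)))))
        have hwu : h u w = 0 := by simpa using hwK (Sum.inl 0)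
        have hwJu : h (J u) w = 0 := by simpa using hwK (Sum.inl 1)
        have hwe : ∀ i, h (e i) w = 0 := fun i => by simpa using hwK (Sum.inr (Sum.inl i))
        have hwJe : ∀ i, h (J (e i)) w = 0 := fun i => by simpa using hwK (Sum.inr (Sum.inr i))
        have hweJ : ∀ i, h (e i) (J w) = 0 := by
          intro i
          have t := hJinv (e i) (J w)
          rw [hJ w, map_neg] at t
          rw [← t, hwJe i]
          simp
        have hcase : ∀ i : Fin (k+1), (∃ j : Fin k, i = j.castSucc) ∨ i = Fin.last k :=
          fun i => i.eq_castSucc_or_eq_last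
        refine ⟨Fin.snoc e w, ?_, ?_, ?_, ?_, ?_⟩
        · intro i
          rcases hcase i with ⟨j, rfl⟩ | rfl
          · simpa using he1 j
          · simpa using hw0
        · intro i
          rcases hcase i with ⟨j, rfl⟩ | rfl
          · simpa using he2 j
          · simpa using hwu
        · intro i
          rcases hcase i with ⟨j, rfl⟩ | rfl
          · simpa using he3 j
          · simpa using hwJu
        · intro i j hij
          rcases hcase i with ⟨i', rfl⟩ | rfl <;> rcases hcase j with ⟨j', rfl⟩ | rfl
          · simp only [Fin.snoc_castSucc]
            exact he4 i' j' (fun hh => hij (by rw [hh]))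
          · simp only [Fin.snoc_castSucc, Fin.snoc_last]
            exact hwe i'
          · simp only [Fin.snoc_castSucc, Fin.snoc_last]
            rw [hsymm]
            exact hwe j'
          · exact absurd rfl hij
        · intro i j hij
          rcases hcase i with ⟨i', rfl⟩ | rfl <;> rcases hcase j with ⟨j', rfl⟩ | rfl
          · simp only [Fin.snoc_castSucc]
            exact he5 i' j' (fun hh => hij (by rw [hh]))
          · simp only [Fin.snoc_castSucc, Fin.snoc_last]
            exact hwJe i'
          · simp only [Fin.snoc_castSucc, Fin.snoc_last]
            rw [hsymm]
            exact hweJ j'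
          · exact absurd rfl hij
    obtain ⟨e, he1, he2, he3, he4, he5⟩ := exful m (by omega)
    -- derived orthogonality facts
    have fact3 : ∀ i, h u (J (e i)) = 0 := by
      intro i
      have t := hJinv u (J (e i))
      rw [hJ (e i), map_neg] at t
      rw [← t, he3 i]
      simp
    have fact4 : ∀ i, h (J u) (J (e i)) = 0 := by
      intro i
      rw [hJinv]
      exact he2 i
    have g5 : ∀ i, h (e i) u = 0 := fun i => by rw [hsymm]; exact he2 i
    have g6 : ∀ i, h (e i) (J u) = 0 := fun i => by rw [hsymm]; exact he3 i
    have g7 : ∀ i, h (J (e i)) u = 0 := fun i => by rw [hsymm]; exact fact3 i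
    have g8 : ∀ i, h (J (e i)) (J u) = 0 := fun i => by rw [hJinv]; exact g5 i
    have g11 : ∀ i j, i ≠ j → h (e i) (J (e j)) = 0 := by
      intro i j hij
      rw [hsymm]
      exact he5 j i (Ne.symm hij)
    have g12 : ∀ i j, i ≠ j → h (J (e i)) (J (e j)) = 0 := by
      intro i j hij
      rw [hJinv]
      exact he4 i j hij
    -- facts about α u and η on the family
    have hαu : ∀ w', α u w' = (α x0 q * h u u) * η w' := by
      intro w'
      rw [halpha u w']
      have h0 : η u = 0 := hηu
      rw [h0, hξu]
      ring
    have hηJu : η (J u) = - h u u := by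
      rw [hηapp, hJ u, map_neg, hξu]
    have hαuJu : α u (J u) = -(α x0 q * h u u * h u u) := by
      rw [hαu (J u), hηJu]
      ring
    have hηe : ∀ i, η (e i) = 0 := by
      intro i
      rw [hηapp, ← hu (J (e i))]
      exact fact3 i
    have hηJe : ∀ i, η (J (e i)) = 0 := by
      intro i
      rw [hηapp, hJ (e i), map_neg, ← hu (e i), he2 i]
      simp
    -- the test tuple
    set b : Fin (2 + 2 * m) → V := fun x =>
      Sum.elim (fun j : Fin 2 => if j = (0 : Fin 2) then u else J u)
        (fun pp : Fin m × Fin 2 => if pp.2 = (0 : Fin 2) then e pp.1 else J (e pp.1))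
        ((S7.E2 m).symm x) with hb_def
    have hbE : ∀ y, b (S7.E2 m y) = Sum.elim (fun j : Fin 2 => if j = (0 : Fin 2) then u else J u)
        (fun pp : Fin m × Fin 2 => if pp.2 = (0 : Fin 2) then e pp.1 else J (e pp.1)) y := by
      intro y
      rw [hb_def]
      simp
    have hb0 : b (S7.z0 m) = u := by
      rw [← S7.E2_inl0, hbE]
      simp
    have hb1 : b (S7.z1 m) = J u := by
      rw [← S7.E2_inl1, hbE]
      norm_num
    have hbpl : ∀ i, b (S7.pl m i) = e i := by
      intro i
      rw [← S7.E2_inr0, hbE]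
      simp
    have hbpr : ∀ i, b (S7.pr m i) = J (e i) := by
      intro i
      rw [← S7.E2_inr1, hbE]
      norm_num
    -- hypotheses of lemB
    have hξ0' : ξ (b (S7.z0 m)) ≠ 0 := by
      rw [hb0, hξu]
      exact ne_of_gt su_pos
    have hξ' : ∀ j, j ≠ S7.z0 m → ξ (b j) = 0 := by
      intro j hj
      obtain ⟨y, rfl⟩ := (S7.E2 m).surjective j
      rcases y with jj | ⟨i, ε⟩
      · rcases S7.fin_two jj with rfl | rfl
        · exact absurd S7.E2_inl0 hj
        · rw [show b (S7.E2 m (Sum.inl 1)) = J u from by rw [S7.E2_inl1]; exact hb1]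
          exact hηu
      · rcases S7.fin_two ε with rfl | rfl
        · rw [show b (S7.E2 m (Sum.inr (i, 0))) = e i from by rw [S7.E2_inr0]; exact hbpl i]
          rw [← hu (e i)]
          exact he2 i
        · rw [show b (S7.E2 m (Sum.inr (i, 1))) = J (e i) from by rw [S7.E2_inr1]; exact hbpr i]
          rw [← hu (J (e i))]
          exact fact3 i
    have hθ1' : α u (b (S7.z1 m)) ≠ 0 := by
      rw [hb1, hαuJu]
      have : h u u ≠ 0 := ne_of_gt su_pos
      intro hz
      apply hc
      have := neg_eq_zero.mp hz
      rcases mul_eq_zero.mp this with h' | h'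
      · rcases mul_eq_zero.mp h' with h'' | h''
        · exact h''
        · exact absurd h'' ‹h u u ≠ 0›
      · exact absurd h' ‹h u u ≠ 0›
    have hθ' : ∀ j, j ≠ S7.z1 m → α u (b j) = 0 := by
      intro j hj
      obtain ⟨y, rfl⟩ := (S7.E2 m).surjective j
      rcases y with jj | ⟨i, ε⟩
      · rcases S7.fin_two jj with rfl | rfl
        · rw [show b (S7.E2 m (Sum.inl 0)) = u from by rw [S7.E2_inl0]; exact hb0]
          exact halt u
        · exact absurd S7.E2_inl1 hj
      · rcases S7.fin_two ε with rfl | rfl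
        · rw [show b (S7.E2 m (Sum.inr (i, 0))) = e i from by rw [S7.E2_inr0]; exact hbpl i]
          rw [hαu, hηe i]
          ring
        · rw [show b (S7.E2 m (Sum.inr (i, 1))) = J (e i) from by rw [S7.E2_inr1]; exact hbpr i]
          rw [hαu, hηJe i]
          ring
    have hd' : ∀ i : Fin m, h (J (b (S7.pl m i))) (b (S7.pr m i)) ≠ 0 := by
      intro i
      rw [hbpl, hbpr, hJinv]
      exact ne_of_gt (hpos _ (he1 i))
    have hanti' : ∀ x y : Fin (2 + 2 * m), h (J (b x)) (b y) = - h (J (b y)) (b x) :=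
      fun x y => hωanti (b x) (b y)
    have bu : b (S7.E2 m (Sum.inl 0)) = u := by rw [S7.E2_inl0]; exact hb0
    have bJu : b (S7.E2 m (Sum.inl 1)) = J u := by rw [S7.E2_inl1]; exact hb1
    have be : ∀ i, b (S7.E2 m (Sum.inr (i, 0))) = e i := fun i => by
      rw [S7.E2_inr0]; exact hbpl i
    have bJe : ∀ i, b (S7.E2 m (Sum.inr (i, 1))) = J (e i) := fun i => by
      rw [S7.E2_inr1]; exact hbpr i
    have hoff' : ∀ x y : Fin (2 + 2 * m), h (J (b x)) (b y) ≠ 0 →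
        (x = S7.z0 m ∧ y = S7.z1 m) ∨ (x = S7.z1 m ∧ y = S7.z0 m) ∨
        ∃ i : Fin m, (x = S7.pl m i ∧ y = S7.pr m i) ∨ (x = S7.pr m i ∧ y = S7.pl m i) := by
      intro x y hne
      obtain ⟨yx, rfl⟩ := (S7.E2 m).surjective x
      obtain ⟨yy, rfl⟩ := (S7.E2 m).surjective y
      rcases yx with jx | ⟨ix, εx⟩
      · rcases S7.fin_two jx with rfl | rfl
        · rcases yy with jy | ⟨iy, εy⟩
          · rcases S7.fin_two jy with rfl | rfl
            · refine absurd ?_ hne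
              rw [bu]
              exact hJv0 u
            · exact Or.inl ⟨S7.E2_inl0, S7.E2_inl1⟩
          · rcases S7.fin_two εy with rfl | rfl
            · exact absurd (by rw [bu, be iy]; exact he3 iy) hne
            · exact absurd (by rw [bu, bJe iy]; exact fact4 iy) hne
        · rcases yy with jy | ⟨iy, εy⟩
          · rcases S7.fin_two jy with rfl | rfl
            · exact Or.inr (Or.inl ⟨S7.E2_inl1, S7.E2_inl0⟩)
            · refine absurd ?_ hne
              rw [bJu, hJJ, hsymm u (J u), hJv0 u, neg_zero]
          · rcases S7.fin_two εy with rfl | rfl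
            · refine absurd ?_ hne
              rw [bJu, be iy, hJJ, he2 iy, neg_zero]
            · refine absurd ?_ hne
              rw [bJu, bJe iy, hJJ, fact3 iy, neg_zero]
      · rcases S7.fin_two εx with rfl | rfl
        · rcases yy with jy | ⟨iy, εy⟩
          · rcases S7.fin_two jy with rfl | rfl
            · exact absurd (by rw [be ix, bu]; exact g7 ix) hne
            · exact absurd (by rw [be ix, bJu]; exact g8 ix) hne
          · rcases S7.fin_two εy with rfl | rfl
            · by_cases hxy : ix = iy
              · subst hxy
                exact absurd (by rw [be ix]; exact hJv0 (e ix)) hne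
              · exact absurd (by rw [be ix, be iy]; exact he5 ix iy hxy) hne
            · by_cases hxy : ix = iy
              · subst hxy
                exact Or.inr (Or.inr ⟨ix, Or.inl ⟨S7.E2_inr0 ix, S7.E2_inr1 ix⟩⟩)
              · exact absurd (by rw [be ix, bJe iy]; exact g12 ix iy hxy) hne
        · rcases yy with jy | ⟨iy, εy⟩
          · rcases S7.fin_two jy with rfl | rfl
            · refine absurd ?_ hne
              rw [bJe ix, bu, hJJ, g5 ix, neg_zero]
            · refine absurd ?_ hne
              rw [bJe ix, bJu, hJJ, g6 ix, neg_zero]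
          · rcases S7.fin_two εy with rfl | rfl
            · by_cases hxy : ix = iy
              · subst hxy
                exact Or.inr (Or.inr ⟨ix, Or.inr ⟨S7.E2_inr1 ix, S7.E2_inr0 ix⟩⟩)
              · refine absurd ?_ hne
                rw [bJe ix, be iy, hJJ, he4 ix iy hxy, neg_zero]
            · by_cases hxy : ix = iy
              · subst hxy
                refine absurd ?_ hne
                rw [bJe ix, hJJ, hsymm (e ix) (J (e ix)), hJv0 (e ix), neg_zero]
              · refine absurd ?_ hne
                rw [bJe ix, bJe iy, hJJ, g11 ix iy hxy, neg_zero]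
    have hBne := S7.lemB (m := m) b (fun x => ξ x) (fun y => α u y) (fun x y => h (J x) y)
      hξ0' hξ' hθ1' hθ' hd' hanti' hoff'
    apply hBne
    -- now collapse h2 evaluated at b into the alternating sum
    set αh : (Fin 2 → V) → ℝ := fun v : Fin 2 → V => α (v 0) (v 1) with hαh_def
    set θh : (Fin 1 → V) → ℝ := iprodF u αh with hθh_def
    set ω2 : (Fin 2 → V) → ℝ := fun v : Fin 2 → V => h (J (v 0)) (v 1) with hω2_def
    have hθhapp : ∀ w : Fin 1 → V, θh w = α u (w 0) := fun w => rfl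
    have hωb : ∀ w : Fin 2 → V, ω2 w = (fun x y : V => h (J x) y) (w 0) (w 1) := fun w => rfl
    have e0 : ∀ v : Fin (1+1) → V, wedgeF (oneF fun x => ξ x) θh v =
        S7.A (S7.D (oneF fun x => ξ x) θh) v := by
      intro v
      rw [S7.wedgeF_eq]
      norm_num
    have h2b := congrFun h2 b
    rw [S7.wedgeF_eq] at h2b
    have eD : S7.D (wedgeF (oneF fun x => ξ x) θh) (omegaPow ω2 m) =
        fun w => (1/2^m : ℝ) * S7.D (S7.A (S7.D (oneF fun x => ξ x) θh))
          (S7.A (S7.P (fun x y : V => h (J x) y) m)) w := by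
      funext w
      rw [S7.D, S7.D, e0, S7.omegaPow_A ω2 (fun x y : V => h (J x) y) hωb]
      ring
    rw [eD, S7.A_smul, S7.K1, S7.K2] at h2b
    have eQ : S7.D (S7.D (oneF fun x => ξ x) θh) (S7.P (fun x y : V => h (J x) y) m) =
        fun w : Fin (2+2*m) → V => ξ (w (S7.z0 m)) * α u (w (S7.z1 m)) *
          ∏ i : Fin m, h (J (w (S7.pl m i))) (w (S7.pr m i)) := by
      funext w
      rfl
    rw [eQ] at h2b
    have c1 : (((1+1).factorial : ℕ) : ℝ) ≠ 0 := Nat.cast_ne_zero.mpr (Nat.factorial_ne_zero _)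
    have c2 : (((2*m).factorial : ℕ) : ℝ) ≠ 0 := Nat.cast_ne_zero.mpr (Nat.factorial_ne_zero _)
    have c3 : (2:ℝ)^m ≠ 0 := by positivity
    field_simp at h2b
    simpa using h2b


end
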